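/- arXiv:2601.04338 — 2 statements merged into one kernel-verified Lean document; each statement's English description precedes it below -/
import Mathlib

section
/- In an AG-group G, for any three points a,b,c there is a unique d such that Par(a,b,c,d) holds; namely d = (c*b⁻¹)*a. -/
class AGGroup (G : Type*) extends Mul G, Inv G where
  e : G
  left_id : ∀ a : G, e * a = a
  inv_mul : ∀ a : G, a⁻¹ * a = e
  mul_inv : ∀ a : G, a * a⁻¹ = e
  left_invertive : ∀ x y z : G, (x * y) * z = (z * y) * x

def AGPar {G : Type*} [AGGroup G] (a b c d : G) : Prop :=
  ∃ p q : G, p * a = q * b ∧ p * d = q * c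

namespace AGGroup

variable {G : Type*} [AGGroup G]

lemma medial (a b c d : G) : (a*b)*(c*d) = (a*c)*(b*d) := by
  calc (a*b)*(c*d) = ((c*d)*b)*a := left_invertive a b (c*d)
    _ = ((b*d)*c)*a := by rw [left_invertive c d b]
    _ = (a*c)*(b*d) := left_invertive (b*d) c a

lemma swap_left (a b c : G) : a*(b*c) = b*(a*c) := by
  calc a*(b*c) = (e*a)*(b*c) := by rw [left_id]
    _ = (e*b)*(a*c) := medial e a b c
    _ = b*(a*c) := by rw [left_id]

lemma mul_e (a b : G) : (a*b)*e = b*a := by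
  rw [left_invertive, left_id]

lemma solve {p x r : G} (h : p * x = r) : x = (p⁻¹ * e) * r := by
  have hx : x * p = r * e := by rw [← h, mul_e]
  calc x = (p⁻¹ * p) * x := by rw [AGGroup.inv_mul, left_id]
    _ = (x * p) * p⁻¹ := left_invertive p⁻¹ p x
    _ = (r * e) * p⁻¹ := by rw [hx]
    _ = (p⁻¹ * e) * r := left_invertive r e p⁻¹

end AGGroup

theorem stmt14 {G : Type*} [AGGroup G] (a b c : G) :
    (∃! d : G, AGPar a b c d) ∧ AGPar a b c ((c * b⁻¹) * a) := by
  open AGGroup in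
  have hpar : AGPar a b c ((c * b⁻¹) * a) := by
    refine ⟨e, a * b⁻¹, ?_, ?_⟩
    · rw [left_id, left_invertive a b⁻¹ b, AGGroup.mul_inv, left_id]
    · rw [left_id, left_invertive c b⁻¹ a]
  refine ⟨⟨(c * b⁻¹) * a, hpar, ?_⟩, hpar⟩
  open AGGroup in
  rintro d ⟨p, q, h1, h2⟩
  have ha : a = (p⁻¹ * e) * (q * b) := solve h1
  have hd : d = (p⁻¹ * e) * (q * c) := solve h2
  rw [hd]
  rw [ha]
  calc (p⁻¹ * e) * (q * c) = (p⁻¹ * q) * (e * c) := medial _ _ _ _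
    _ = (p⁻¹ * q) * c := by rw [left_id]
    _ = (c * q) * p⁻¹ := left_invertive p⁻¹ q c
    _ = (c * q) * ((p⁻¹ * e) * e) := by rw [mul_e, left_id]
    _ = (c * (p⁻¹ * e)) * (q * e) := medial _ _ _ _
    _ = (c * (p⁻¹ * e)) * (q * (b⁻¹ * b)) := by rw [AGGroup.inv_mul]
    _ = (c * (p⁻¹ * e)) * (b⁻¹ * (q * b)) := by rw [swap_left q b⁻¹ b]
    _ = (c * b⁻¹) * ((p⁻¹ * e) * (q * b)) := (medial _ _ _ _).symm
end

section
/- Let G be an AG-group. If Par(a₁,b₁,c₁,d₁) and Par(a₂,b₂,c₂,d₂) hold, then Par(a₁*a₂, b₁*b₂, c₁*c₂, d₁*d₂) holds. -/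
lemma AG_medial {G : Type*} [AGGroup G] (a b c d : G) :
    (a * b) * (c * d) = (a * c) * (b * d) := by
  rw [AGGroup.left_invertive a b (c*d), AGGroup.left_invertive c d b,
    AGGroup.left_invertive (b*d) c a]

theorem stmt19 {G : Type*} [AGGroup G] (a1 b1 c1 d1 a2 b2 c2 d2 : G)
    (h1 : AGPar a1 b1 c1 d1) (h2 : AGPar a2 b2 c2 d2) :
    AGPar (a1 * a2) (b1 * b2) (c1 * c2) (d1 * d2) := by
  obtain ⟨p1, q1, hp1, hq1⟩ := h1
  obtain ⟨p2, q2, hp2, hq2⟩ := h2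
  exact ⟨p1 * p2, q1 * q2, by rw [AG_medial, hp1, hp2, AG_medial],
    by rw [AG_medial, hq1, hq2, AG_medial]⟩
end
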